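/- arXiv:1505.02932 — 2 statements merged into one kernel-verified Lean document; each statement's English description precedes it below -/
import Mathlib

section
/- Let p be a prime, k a field of characteristic p, r ≥ 0, d ≥ 1 with p ∤ d. Let R = k[x₀,…,xₙ], σ the k-algebra automorphism fixing x₁,…,xₙ and mapping x₀ ↦ x₀ + γ for a fixed linear form γ ∈ k[x₁,…,xₙ]. For any homogeneous polynomial b ∈ k[x₁,…,xₙ] of degree k with 1 ≤ k ≤ p^r, one has σ(x₀^(p^r·d - k)·b) ≡ Σ_{j=0}^{p^r - k} C(p^r - k, j)·x₀^(p^r·d - k - j)·γ^j·b modulo T, where T is the span of monomials of degree at least p^r + 1 in x₁,…,xₙ. -/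
open MvPolynomial

/-- The subspace `T`: span of the monomials whose total degree in the
variables `x₁,…,xₙ` is at least `p^r + 1` (within total degree `p^r·d`). -/
noncomputable def Tsub (K : Type*) [Field K] (n p r d : ℕ) :
    Submodule K (MvPolynomial (Fin (n + 1)) K) :=
  Submodule.span K {f | ∃ m : Fin (n + 1) →₀ ℕ,
    (∑ i, m i) = p ^ r * d ∧ p ^ r + 1 ≤ (∑ i, m i) - m 0 ∧ f = monomial m (1 : K)}

section Aux

variable {K : Type*} [Field K] {n : ℕ}

lemma sum_univ_eq_degree (m : Fin (n + 1) →₀ ℕ) : (∑ i, m i) = m.degree :=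
  (Finset.sum_subset (Finset.subset_univ _)
    (fun i _ hi => Finsupp.notMem_support_iff.mp hi)).symm

lemma deg_of_mem_support {φ : MvPolynomial (Fin (n + 1)) K} {N : ℕ}
    (hφ : φ.IsHomogeneous N) {m : Fin (n + 1) →₀ ℕ} (hm : m ∈ φ.support) :
    (∑ i, m i) = N := by
  rw [sum_univ_eq_degree, Finsupp.degree_eq_weight_one]
  exact hφ (mem_support_iff.mp hm)

lemma nox0_mul {u v : MvPolynomial (Fin (n + 1)) K}
    (hu : ∀ m ∈ u.support, m 0 = 0) (hv : ∀ m ∈ v.support, m 0 = 0) :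
    ∀ m ∈ (u * v).support, m 0 = 0 := by
  classical
  intro m hm
  obtain ⟨m1, hm1, m2, hm2, rfl⟩ := Finset.mem_add.mp (support_mul u v hm)
  simp [Finsupp.add_apply, hu m1 hm1, hv m2 hm2]

lemma nox0_pow {u : MvPolynomial (Fin (n + 1)) K}
    (hu : ∀ m ∈ u.support, m 0 = 0) (e : ℕ) :
    ∀ m ∈ (u ^ e).support, m 0 = 0 := by
  induction e with
  | zero =>
    intro m hm
    rw [pow_zero, mem_support_iff, coeff_one] at hm
    by_cases h : (0 : Fin (n + 1) →₀ ℕ) = m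
    · rw [← h]; rfl
    · simp [h] at hm
  | succ e ih =>
    rw [pow_succ]
    exact nox0_mul ih hu

lemma mem_Tsub {p r d : ℕ} {f : MvPolynomial (Fin (n + 1)) K}
    (h : ∀ m ∈ f.support, (∑ i, m i) = p ^ r * d ∧ p ^ r + 1 ≤ (∑ i, m i) - m 0) :
    f ∈ Tsub K n p r d := by
  rw [f.as_sum]
  apply Submodule.sum_mem
  intro m hm
  have hsm : monomial m (coeff m f) = (coeff m f) • monomial m (1 : K) := by
    rw [smul_monomial, smul_eq_mul, mul_one]
  rw [hsm]
  exact Submodule.smul_mem _ _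
    (Submodule.subset_span ⟨m, (h m hm).1, (h m hm).2, rfl⟩)

lemma aeval_fix (γ : MvPolynomial (Fin (n + 1)) K) {q : MvPolynomial (Fin (n + 1)) K}
    (hq : ∀ m ∈ q.support, m 0 = 0) :
    aeval (fun i => if i = 0 then X 0 + γ else X i) q = q := by
  conv_rhs => rw [q.as_sum]
  conv_lhs => rw [q.as_sum]
  rw [map_sum]
  refine Finset.sum_congr rfl fun m hm => ?_
  rw [aeval_monomial, monomial_eq]
  congr 1
  refine Finsupp.prod_congr fun i hi => ?_
  have hi0 : i ≠ 0 := by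
    intro h
    exact Finsupp.mem_support_iff.mp hi (by rw [h]; exact hq m hm)
  simp [hi0]

end Aux

theorem stmt7 (p : ℕ) (hp : p.Prime) (K : Type*) [Field K] [CharP K p]
    (r d n : ℕ) (hd : 1 ≤ d) (hpd : ¬ p ∣ d)
    (γ : MvPolynomial (Fin (n + 1)) K) (hγ : γ.IsHomogeneous 1)
    (hγ0 : ∀ m ∈ γ.support, m 0 = 0)
    (k : ℕ) (hk1 : 1 ≤ k) (hk2 : k ≤ p ^ r)
    (b : MvPolynomial (Fin (n + 1)) K) (hb : b.IsHomogeneous k)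
    (hb0 : ∀ m ∈ b.support, m 0 = 0) :
    aeval (fun i => if i = 0 then X 0 + γ else X i) (X 0 ^ (p ^ r * d - k) * b) -
      ∑ j ∈ Finset.range (p ^ r - k + 1),
        C (((p ^ r - k).choose j : K)) * X 0 ^ (p ^ r * d - k - j) * γ ^ j * b
    ∈ Tsub K n p r d := by
  classical
  obtain ⟨d', rfl⟩ : ∃ d', d = d' + 1 := ⟨d - 1, by omega⟩
  set e := p ^ r with he
  rw [map_mul, map_pow, aeval_X, aeval_fix γ hb0]
  simp only [reduceIte]
  haveI : Fact p.Prime := ⟨hp⟩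
  have hfrob : (X 0 + γ : MvPolynomial (Fin (n + 1)) K) ^ e = X 0 ^ e + γ ^ e := by
    rw [he]
    exact add_pow_char_pow _ γ p r
  have hmul : e * (d' + 1) = e * d' + e := by ring
  have hN : e * (d' + 1) - k = e * d' + (e - k) := by omega
  -- binomial identity
  have hbinom : X 0 ^ (e * d') * ((X 0 + γ) ^ (e - k) * b)
      = ∑ j ∈ Finset.range (e - k + 1),
        C (((e - k).choose j : K)) * X 0 ^ (e * (d' + 1) - k - j) * γ ^ j * b := by
    rw [add_comm (X 0 : MvPolynomial (Fin (n + 1)) K) γ, add_pow]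
    rw [Finset.sum_mul, Finset.mul_sum]
    refine Finset.sum_congr rfl fun j hj => ?_
    have hj' : j ≤ e - k := Finset.mem_range_succ_iff.mp hj
    have hexp : e * (d' + 1) - k - j = e * d' + (e - k - j) := by omega
    rw [hexp, pow_add, C_eq_coe_nat]
    ring
  -- key factorization
  have hkey : (X 0 + γ : MvPolynomial (Fin (n + 1)) K) ^ (e * (d' + 1) - k) * b -
      ∑ j ∈ Finset.range (e - k + 1),
        C (((e - k).choose j : K)) * X 0 ^ (e * (d' + 1) - k - j) * γ ^ j * b
      = ((X 0 ^ e + γ ^ e) ^ d' - X 0 ^ (e * d')) * ((X 0 + γ) ^ (e - k) * b) := by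
    have h1 : (X 0 + γ : MvPolynomial (Fin (n + 1)) K) ^ (e * (d' + 1) - k)
        = (X 0 ^ e + γ ^ e) ^ d' * (X 0 + γ) ^ (e - k) := by
      rw [hN, pow_add, pow_mul, hfrob]
    rw [h1, ← hbinom]
    ring
  rw [hkey]
  -- homogeneity facts
  have hX0 : (X 0 : MvPolynomial (Fin (n + 1)) K).IsHomogeneous 1 := isHomogeneous_X _ _
  have hX0e : ((X 0 : MvPolynomial (Fin (n + 1)) K) ^ e).IsHomogeneous e := by
    simpa using hX0.pow e
  have hγe : (γ ^ e).IsHomogeneous e := by simpa using hγ.pow e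
  have hA : (((X 0 : MvPolynomial (Fin (n + 1)) K) ^ e + γ ^ e) ^ d').IsHomogeneous (e * d') :=
    (hX0e.add hγe).pow d'
  have hB : ((X 0 : MvPolynomial (Fin (n + 1)) K) ^ (e * d')).IsHomogeneous (e * d') := by
    simpa using hX0.pow (e * d')
  have hC : (((X 0 : MvPolynomial (Fin (n + 1)) K) + γ) ^ (e - k)).IsHomogeneous (e - k) := by
    simpa using (hX0.add hγ).pow (e - k)
  have hP : ((((X 0 : MvPolynomial (Fin (n + 1)) K) ^ e + γ ^ e) ^ d' - X 0 ^ (e * d')) *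
      ((X 0 + γ) ^ (e - k) * b)).IsHomogeneous (e * (d' + 1)) := by
    have h2 : e * (d' + 1) = e * d' + ((e - k) + k) := by omega
    rw [h2]
    exact (hA.sub hB).mul (hC.mul hb)
  -- divisibility
  obtain ⟨q, hq⟩ : (γ ^ e) ∣ (((X 0 : MvPolynomial (Fin (n + 1)) K) ^ e + γ ^ e) ^ d'
      - X 0 ^ (e * d')) := by
    have := sub_dvd_pow_sub_pow ((X 0 : MvPolynomial (Fin (n + 1)) K) ^ e + γ ^ e) (X 0 ^ e) d'
    rw [add_sub_cancel_left, ← pow_mul] at this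
    exact this
  have hfac : (((X 0 : MvPolynomial (Fin (n + 1)) K) ^ e + γ ^ e) ^ d' - X 0 ^ (e * d')) *
      ((X 0 + γ) ^ (e - k) * b) = (γ ^ e * b) * (q * (X 0 + γ) ^ (e - k)) := by
    rw [hq]; ring
  have hγeb : ((γ : MvPolynomial (Fin (n + 1)) K) ^ e * b).IsHomogeneous (e + k) := hγe.mul hb
  have hγeb0 : ∀ m ∈ ((γ : MvPolynomial (Fin (n + 1)) K) ^ e * b).support, m 0 = 0 :=
    nox0_mul (nox0_pow hγ0 e) hb0
  apply mem_Tsub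
  intro m hm
  have hsum : (∑ i, m i) = e * (d' + 1) := deg_of_mem_support hP hm
  refine ⟨hsum, ?_⟩
  rw [hfac] at hm
  obtain ⟨m1, hm1, m2, hm2, rfl⟩ := Finset.mem_add.mp
    (support_mul (γ ^ e * b) (q * (X 0 + γ) ^ (e - k)) hm)
  have hsum1 : (∑ i, m1 i) = e + k := deg_of_mem_support hγeb hm1
  have hm10 : m1 0 = 0 := hγeb0 m1 hm1
  have hsplit : (∑ i, (m1 + m2) i) = (∑ i, m1 i) + (∑ i, m2 i) := by
    simp [Finsupp.add_apply, Finset.sum_add_distrib]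
  have hm20 : m2 0 ≤ ∑ i, m2 i :=
    Finset.single_le_sum (fun i _ => Nat.zero_le _) (Finset.mem_univ 0)
  have hmi0 : (m1 + m2) 0 = m1 0 + m2 0 := rfl
  omega
end

section
/- Let k be an infinite field of prime characteristic p, G a group acting k-linearly on a finite-dimensional k-vector space V and hence on the polynomial ring k[V] by algebra automorphisms preserving the grading. Suppose v ∈ V is a nonzero fixed point of G, r ≥ 0, and d ≥ 1 is coprime to p. If there exists a G-invariant homogeneous polynomial f of degree p^r·d with f(v) ≠ 0, then there exists a G-invariant homogeneous polynomial f̃ of degree p^r with f̃(v) ≠ 0. -/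
open MvPolynomial

/-- The action of a linear automorphism `A` of `V = Fin n → K` on the polynomial
ring `K[V] = K[x₁,…,xₙ]`: the polynomial function `f` is sent to `f ∘ A⁻¹`,
i.e. `xᵢ` is substituted by the `i`-th coordinate function of `A⁻¹`. -/
noncomputable def polyAct {K : Type*} [Field K] {n : ℕ}
    (A : (Fin n → K) ≃ₗ[K] (Fin n → K)) (f : MvPolynomial (Fin n) K) :
    MvPolynomial (Fin n) K :=
  aeval (fun i => ∑ j, C (A.symm (Pi.single j 1) i) * X j) f

section Aux

variable {K : Type*} [Field K] {n : ℕ}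

lemma aeval_eq_eval'' (w : Fin n → K) (h : MvPolynomial (Fin n) K) :
    aeval w h = eval w h := by
  rw [aeval_def, Algebra.algebraMap_self]
  rfl

lemma eval_smul_of_isHomogeneous {φ : MvPolynomial (Fin n) K} {m : ℕ}
    (hφ : φ.IsHomogeneous m) (t : K) (w : Fin n → K) :
    eval (t • w) φ = t ^ m * eval w φ := by
  rw [eval_eq, eval_eq, Finset.mul_sum]
  refine Finset.sum_congr rfl fun d hd => ?_
  rw [MvPolynomial.mem_support_iff] at hd
  have hdeg : (∑ i ∈ d.support, d i) = m := by
    have h := hφ hd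
    simpa [Finsupp.weight_apply, Finsupp.sum] using h
  have : (∏ i ∈ d.support, (t • w) i ^ d i)
      = t ^ m * ∏ i ∈ d.support, w i ^ d i := by
    rw [← hdeg, ← Finset.prod_pow_eq_pow_sum, ← Finset.prod_mul_distrib]
    refine Finset.prod_congr rfl fun i _ => ?_
    simp [mul_pow]
  rw [this]; ring

lemma polyAct_isHomogeneous (A : (Fin n → K) ≃ₗ[K] (Fin n → K))
    {h : MvPolynomial (Fin n) K} {m : ℕ} (hh : h.IsHomogeneous m) :
    (polyAct A h).IsHomogeneous m := by
  have := hh.aeval (fun i => ∑ j, C (A.symm (Pi.single j 1) i) * X j)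
    (fun i => MvPolynomial.IsHomogeneous.sum _ _ _
      (fun j _ => isHomogeneous_C_mul_X _ _))
  simpa [polyAct, one_mul] using this

lemma homogeneousComponent_polyAct (A : (Fin n → K) ≃ₗ[K] (Fin n → K))
    (F : MvPolynomial (Fin n) K) (m : ℕ) :
    polyAct A (homogeneousComponent m F) = homogeneousComponent m (polyAct A F) := by
  conv_rhs => rw [← sum_homogeneousComponent F]
  have : polyAct A (∑ i ∈ Finset.range (F.totalDegree + 1), homogeneousComponent i F)
      = ∑ i ∈ Finset.range (F.totalDegree + 1), polyAct A (homogeneousComponent i F) :=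
    map_sum (aeval _) _ _
  rw [this, map_sum]
  have hterm : ∀ i ∈ Finset.range (F.totalDegree + 1),
      homogeneousComponent m (polyAct A (homogeneousComponent i F))
      = if m = i then polyAct A (homogeneousComponent i F) else 0 := fun i _ =>
    homogeneousComponent_of_mem (polyAct_isHomogeneous A (homogeneousComponent_isHomogeneous i F))
  rw [Finset.sum_congr rfl hterm, Finset.sum_ite_eq]
  by_cases hm : m ∈ Finset.range (F.totalDegree + 1)
  · rw [if_pos hm]
  · rw [if_neg hm]
    have : homogeneousComponent m F = 0 := by
      apply homogeneousComponent_eq_zero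
      simpa using Nat.lt_of_succ_le (Nat.succ_le_of_lt (by
        simpa [Nat.lt_succ_iff] using hm))
    rw [this]
    simp [polyAct]

end Aux

/-- Degree reduction: if a nonzero fixed point `v` is separated from zero by a
homogeneous invariant of degree `p^r·d` with `gcd(d,p)=1`, then it is separated
from zero by a homogeneous invariant of degree `p^r`. -/
theorem stmt8 (p : ℕ) (hp : p.Prime) (K : Type*) [Field K] [CharP K p] [Infinite K]
    (n : ℕ) (G : Type*) [Group G] (ρ : G →* ((Fin n → K) ≃ₗ[K] (Fin n → K)))
    (r d : ℕ) (hd : 1 ≤ d) (hpd : Nat.Coprime d p)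
    (v : Fin n → K) (hv : v ≠ 0) (hfix : ∀ g, ρ g v = v)
    (f : MvPolynomial (Fin n) K) (hf : f.IsHomogeneous (p ^ r * d))
    (hinv : ∀ g, polyAct (ρ g) f = f) (hfv : eval v f ≠ 0) :
    ∃ f' : MvPolynomial (Fin n) K, f'.IsHomogeneous (p ^ r) ∧
      (∀ g, polyAct (ρ g) f' = f') ∧ eval v f' ≠ 0 := by
  haveI : Fact p.Prime := ⟨hp⟩
  set q := p ^ r with hq
  have hq0 : 0 < q := pow_pos hp.pos r
  set F : MvPolynomial (Fin n) K := aeval (fun i => X i + C (v i)) f with hF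
  set f' : MvPolynomial (Fin n) K := homogeneousComponent q F with hf'
  -- invariance of F
  have hFinv : ∀ g, polyAct (ρ g) F = F := by
    intro g
    set A := ρ g with hA
    have hAv : A.symm v = v := by
      conv_lhs => rw [← hfix g]
      exact A.symm_apply_apply v
    have hv' : ∀ i, (∑ j, A.symm (Pi.single j 1) i * v j) = v i := by
      intro i
      have hsv : A.symm v = ∑ j, v j • A.symm (Pi.single j 1) := by
        conv_lhs => rw [← Finset.univ_sum_single v]
        rw [map_sum]
        refine Finset.sum_congr rfl fun j _ => ?_
        rw [← map_smul]
        congr 1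
        funext k
        simp [Pi.single_apply, smul_eq_mul]
      have := congrFun (congrArg (fun (w : Fin n → K) => w) hsv) i
      calc (∑ j, A.symm (Pi.single j 1) i * v j)
          = ∑ j, (v j • A.symm (Pi.single j 1)) i := by
            refine Finset.sum_congr rfl fun j _ => ?_
            simp [mul_comm]
        _ = A.symm v i := by rw [hsv, Finset.sum_apply]
        _ = v i := by rw [hAv]
    have lhs_eq : polyAct A F = aeval
        (fun i => (∑ j, C (A.symm (Pi.single j 1) i) * X j) + C (v i)) f := by
      rw [hF, polyAct, comp_aeval_apply]
      have hsub : (fun i => aeval (fun i => ∑ j, C (A.symm (Pi.single j 1) i) * X j)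
          (X i + C (v i)))
          = fun i => (∑ j, C (A.symm (Pi.single j 1) i) * X j) + C (v i) := by
        funext i
        simp [algebraMap_eq]
      rw [hsub]
    have rhs_eq : F = aeval
        (fun i => (∑ j, C (A.symm (Pi.single j 1) i) * X j) + C (v i)) f := by
      conv_lhs => rw [hF, ← hinv g, polyAct, comp_aeval_apply]
      have hsub : (fun i => aeval (fun i => X i + C (v i))
          (∑ j, C (A.symm (Pi.single j 1) i) * X j))
          = fun i => (∑ j, C (A.symm (Pi.single j 1) i) * X j) + C (v i) := by
        funext i
        rw [map_sum]
        have hterm : ∀ j, aeval (fun i => X i + C (v i))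
            (C (A.symm (Pi.single j 1) i) * X j)
            = C (A.symm (Pi.single j 1) i) * X j
              + C (A.symm (Pi.single j 1) i * v j) := by
          intro j
          simp [algebraMap_eq, mul_add, map_mul]
        rw [Finset.sum_congr rfl (fun j _ => hterm j), Finset.sum_add_distrib,
          ← map_sum C, hv' i]
      rw [hsub]
    rw [lhs_eq, ← rhs_eq]
  refine ⟨f', homogeneousComponent_isHomogeneous q F, ?_, ?_⟩
  · intro g
    rw [hf', homogeneousComponent_polyAct, hFinv g]
  -- nonvanishing
  set N := F.totalDegree with hN
  set P : Polynomial K := ∑ j ∈ Finset.range (N + 1),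
    Polynomial.C (eval v (homogeneousComponent j F)) * Polynomial.X ^ j with hP
  have hPe : ∀ t : K, P.eval t = (t + 1) ^ (q * d) * eval v f := by
    intro t
    have h1 : P.eval t = eval (t • v) F := by
      conv_rhs => rw [← sum_homogeneousComponent F]
      rw [hP]
      simp only [Polynomial.eval_finset_sum, Polynomial.eval_mul, Polynomial.eval_C,
        Polynomial.eval_pow, Polynomial.eval_X, map_sum]
      refine Finset.sum_congr rfl fun j _ => ?_
      rw [eval_smul_of_isHomogeneous (homogeneousComponent_isHomogeneous j F) t v]
      ring
    have h2 : eval (t • v) F = eval ((t + 1) • v) f := by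
      rw [hF, ← aeval_eq_eval'', ← aeval_eq_eval'', comp_aeval_apply]
      have hsub : (fun i => aeval (t • v) (X i + C (v i))) = (t + 1) • v := by
        funext i
        simp [algebraMap_eq, Pi.smul_apply, smul_eq_mul, add_mul]
      rw [hsub]
    rw [h1, h2, eval_smul_of_isHomogeneous hf]
  set Q : Polynomial K := Polynomial.C (eval v f) * (Polynomial.X + 1) ^ (q * d) with hQ
  have hPQ : P = Q := by
    apply Polynomial.funext
    intro t
    rw [hPe t, hQ]
    simp [mul_comm]
  have hQcoeff : Q.coeff q = eval v f * d := by
    have hexp : ((Polynomial.X + 1 : Polynomial K)) ^ (q * d)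
        = Polynomial.expand K q ((Polynomial.X + 1) ^ d) := by
      rw [map_pow, map_add, Polynomial.expand_X, map_one, hq, pow_mul,
        add_pow_char_pow, one_pow]
    rw [hQ, Polynomial.coeff_C_mul, hexp, Polynomial.coeff_expand hq0,
      if_pos (dvd_refl q), Nat.div_self hq0, Polynomial.coeff_X_add_one_pow,
      Nat.choose_one_right]
  have hd0 : (d : K) ≠ 0 := by
    rw [Ne, CharP.cast_eq_zero_iff K p]
    exact (hp.coprime_iff_not_dvd.mp hpd.symm)
  have hQne : Q.coeff q ≠ 0 := by
    rw [hQcoeff]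
    exact mul_ne_zero hfv hd0
  have hPcoeff : P.coeff q = if q ∈ Finset.range (N + 1)
      then eval v (homogeneousComponent q F) else 0 := by
    rw [hP, Polynomial.finset_sum_coeff]
    rw [Finset.sum_congr rfl (fun j _ => by
      rw [Polynomial.coeff_C_mul, Polynomial.coeff_X_pow, mul_ite, mul_one, mul_zero])]
    rw [Finset.sum_ite_eq]
  rw [hPQ] at hPcoeff
  by_cases hmem : q ∈ Finset.range (N + 1)
  · rw [if_pos hmem] at hPcoeff
    rw [hf', ← hPcoeff]
    exact hQne
  · rw [if_neg hmem] at hPcoeff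
    exact absurd hPcoeff hQne
end
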